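/- arXiv:1708.03036 — 2 statements merged into one kernel-verified Lean document; each statement's English description precedes it below -/
import Mathlib

section
/- For all f, g ∈ H and all a, b, c, d, a', b', c', d' ∈ K with a·d ≠ b·c and a'·d' ≠ b'·c', the elements γf := (a⁴·f + b⁴)/(c⁴·f + d⁴) and δg := (a'⁴·g + b'⁴)/(c'⁴·g + d'⁴) lie in H and a(f,g) ≡ a(γf, δg) (mod K²). (The class of a(f,g) modulo K² is invariant under the action of Γ = PGL₂(K⁴) on both arguments.) -/
/-- The set `K² = {x² : x ∈ K}` of squares of `K`. -/
def sqSet (K : Type*) [Field K] : Set K := {x | ∃ y : K, y ^ 2 = x}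

/-- `K` is two-dimensional as a vector space over its subfield `K²`:
there is some `g ∉ K²`, and for every such `g` the pair `(1, g)` spans `K`
over `K²`. -/
def TwoDimOverSquares (K : Type*) [Field K] : Prop :=
  (∃ g : K, g ∉ sqSet K) ∧
    ∀ g : K, g ∉ sqSet K → ∀ x : K, ∃ a b : K, x = a ^ 2 + b ^ 2 * g

/-- The quantity `a(f,g) = (f₁²·f₃² + f₂⁴)·g / (f₃⁴·g² + f₁⁴)`, where
`f = f₀⁴ + f₁⁴·g + f₂⁴·g² + f₃⁴·g³` is the expansion of `f` with respect to `g`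
in the basis `{1, g, g², g³}` of `K` over `K⁴`. -/
noncomputable def aOf {K : Type*} [Field K] (g f₁ f₂ f₃ : K) : K :=
  ((f₁ ^ 2 * f₃ ^ 2 + f₂ ^ 4) * g) / (f₃ ^ 4 * g ^ 2 + f₁ ^ 4)

/-!
`PGL₂(K⁴)` is generated by the affine maps `x ↦ α⁴ x + β⁴` and the inversion `x ↦ x⁻¹`, so it
suffices to follow the expansion `f = p₀⁴ + p₁⁴ g + p₂⁴ g² + p₃⁴ g³` through these. Acting on `f`,
each of them multiplies the numerator and the denominator of `a(f,g)` by the same nonzero factor.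
Acting on `g`, scaling and inversion do the same, while `g ↦ g + β⁴` adds the square
`(β² (p₁ p₃ + p₂²) / (p₁² + p₃² g))²`. Since `g ∉ K²`, the expansion is unique, so the
coefficients of `γf` with respect to `δg` are the ones produced this way.
-/

section

variable {K : Type*} [Field K]

def quarticExpansion (g p₀ p₁ p₂ p₃ : K) : K :=
  p₀ ^ 4 + p₁ ^ 4 * g + p₂ ^ 4 * g ^ 2 + p₃ ^ 4 * g ^ 3

def HasAModSq (f g r : K) : Prop :=
  ∃ p₀ p₁ p₂ p₃ : K, f = quarticExpansion g p₀ p₁ p₂ p₃ ∧ aOf g p₁ p₂ p₃ + r ∈ sqSet K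

theorem aOf_eq_of_proportional {g h p₁ p₂ p₃ r₁ r₂ r₃ μ : K} (hμ : μ ≠ 0)
    (hnum : (r₁ ^ 2 * r₃ ^ 2 + r₂ ^ 4) * h = μ * ((p₁ ^ 2 * p₃ ^ 2 + p₂ ^ 4) * g))
    (hden : r₃ ^ 4 * h ^ 2 + r₁ ^ 4 = μ * (p₃ ^ 4 * g ^ 2 + p₁ ^ 4)) :
    aOf h r₁ r₂ r₃ = aOf g p₁ p₂ p₃ := by
  rw [aOf, aOf, hnum, hden, mul_div_mul_left _ _ hμ]

theorem ne_zero_of_notMem_sqSet {x : K} (hx : x ∉ sqSet K) : x ≠ 0 := by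
  rintro rfl
  exact hx ⟨0, zero_pow two_ne_zero⟩

theorem inv_notMem_sqSet {x : K} (hx : x ∉ sqSet K) : x⁻¹ ∉ sqSet K := by
  rintro ⟨u, hu⟩
  exact hx ⟨u⁻¹, by rw [inv_pow, hu, inv_inv]⟩

namespace HasAModSq

theorem pow_four_mul_right {f g r α : K} (hα : α ≠ 0) (h : HasAModSq f g r) :
    HasAModSq f (α ^ 4 * g) r := by
  obtain ⟨p₀, p₁, p₂, p₃, rfl, hr⟩ := h
  refine ⟨p₀, p₁ / α, p₂ / α ^ 2, p₃ / α ^ 3, ?_, ?_⟩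
  · unfold quarticExpansion
    field_simp
  · convert hr using 2
    exact aOf_eq_of_proportional (inv_ne_zero (pow_ne_zero 4 hα)) (by field_simp) (by field_simp)

theorem inv_right {f g r : K} (hg : g ≠ 0) (h : HasAModSq f g r) : HasAModSq f g⁻¹ r := by
  obtain ⟨p₀, p₁, p₂, p₃, rfl, hr⟩ := h
  refine ⟨p₀, p₃ * g, p₂ * g, p₁ * g, ?_, ?_⟩
  · unfold quarticExpansion
    field_simp
    ring
  · convert hr using 2
    exact aOf_eq_of_proportional (pow_ne_zero 2 hg) (by field_simp) (by field_simp; ring)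

end HasAModSq

section CharTwo

variable [CharP K 2]

theorem add_mem_sqSet {x y : K} (hx : x ∈ sqSet K) (hy : y ∈ sqSet K) : x + y ∈ sqSet K := by
  obtain ⟨u, rfl⟩ := hx
  obtain ⟨v, rfl⟩ := hy
  exact ⟨u + v, CharTwo.add_sq u v⟩

theorem pow_four_mul_notMem_sqSet {x α : K} (hα : α ≠ 0) (hx : x ∉ sqSet K) :
    α ^ 4 * x ∉ sqSet K := by
  rintro ⟨u, hu⟩
  refine hx ⟨u / α ^ 2, ?_⟩
  field_simp
  grind

theorem add_pow_four_notMem_sqSet {x : K} (β : K) (hx : x ∉ sqSet K) :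
    x + β ^ 4 ∉ sqSet K := by
  rintro ⟨u, hu⟩
  exact hx ⟨u + β ^ 2, by grind⟩

theorem eq_and_eq_of_sq_add_sq_mul_eq {g A B A' B' : K} (hg : g ∉ sqSet K)
    (h : A ^ 2 + B ^ 2 * g = A' ^ 2 + B' ^ 2 * g) : A = A' ∧ B = B' := by
  have hB : B = B' := by
    by_contra hne
    have hne' : B + B' ≠ 0 := fun h0 => hne (CharTwo.add_eq_zero.mp h0)
    refine hg ⟨(A + A') / (B + B'), ?_⟩
    field_simp
    grind
  subst hB
  exact ⟨CharTwo.sq_inj.mp (add_right_cancel h), rfl⟩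

theorem quarticExpansion_eq (g p₀ p₁ p₂ p₃ : K) :
    quarticExpansion g p₀ p₁ p₂ p₃ = (p₀ ^ 2 + p₂ ^ 2 * g) ^ 2 + (p₁ ^ 2 + p₃ ^ 2 * g) ^ 2 * g := by
  unfold quarticExpansion
  grind

theorem quarticExpansion_inj {g p₀ p₁ p₂ p₃ q₀ q₁ q₂ q₃ : K} (hg : g ∉ sqSet K)
    (h : quarticExpansion g p₀ p₁ p₂ p₃ = quarticExpansion g q₀ q₁ q₂ q₃) :
    p₀ = q₀ ∧ p₁ = q₁ ∧ p₂ = q₂ ∧ p₃ = q₃ := by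
  rw [quarticExpansion_eq, quarticExpansion_eq] at h
  obtain ⟨hA, hB⟩ := eq_and_eq_of_sq_add_sq_mul_eq hg h
  obtain ⟨h₀, h₂⟩ := eq_and_eq_of_sq_add_sq_mul_eq hg hA
  obtain ⟨h₁, h₃⟩ := eq_and_eq_of_sq_add_sq_mul_eq hg hB
  exact ⟨h₀, h₁, h₂, h₃⟩

theorem sq_add_sq_mul_ne_zero {g p₀ p₁ p₂ p₃ : K} (hg : g ∉ sqSet K)
    (hf : quarticExpansion g p₀ p₁ p₂ p₃ ∉ sqSet K) : p₁ ^ 2 + p₃ ^ 2 * g ≠ 0 := by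
  intro h0
  obtain ⟨rfl, rfl⟩ : p₁ = 0 ∧ p₃ = 0 :=
    eq_and_eq_of_sq_add_sq_mul_eq hg (by rw [h0]; ring)
  exact hf ⟨p₀ ^ 2 + p₂ ^ 2 * g, by rw [quarticExpansion_eq]; ring⟩

theorem aOf_add_pow_four {g p₁ p₂ p₃ : K} (β : K) (hB : p₁ ^ 2 + p₃ ^ 2 * g ≠ 0) :
    aOf (g + β ^ 4) (p₁ + p₃ * β ^ 2) (p₂ + p₃ * β) p₃ =
      aOf g p₁ p₂ p₃ + (β ^ 2 * (p₁ * p₃ + p₂ ^ 2) / (p₁ ^ 2 + p₃ ^ 2 * g)) ^ 2 := by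
  have hden : p₃ ^ 4 * g ^ 2 + p₁ ^ 4 = (p₁ ^ 2 + p₃ ^ 2 * g) ^ 2 := by grind
  have hden' : p₃ ^ 4 * (g + β ^ 4) ^ 2 + (p₁ + p₃ * β ^ 2) ^ 4 = (p₁ ^ 2 + p₃ ^ 2 * g) ^ 2 := by
    grind
  rw [aOf, aOf, hden, hden']
  field_simp
  grind

namespace HasAModSq

theorem add_pow_four_right {f g r : K} (β : K) (hg : g ∉ sqSet K) (hf : f ∉ sqSet K)
    (h : HasAModSq f g r) : HasAModSq f (g + β ^ 4) r := by
  obtain ⟨p₀, p₁, p₂, p₃, rfl, hr⟩ := h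
  refine ⟨p₀ + p₁ * β + p₂ * β ^ 2 + p₃ * β ^ 3, p₁ + p₃ * β ^ 2, p₂ + p₃ * β, p₃, ?_, ?_⟩
  · unfold quarticExpansion
    grind
  · rw [aOf_add_pow_four β (sq_add_sq_mul_ne_zero hg hf), add_right_comm]
    exact add_mem_sqSet hr ⟨_, rfl⟩

theorem affine_left {f g r α : K} (β : K) (hα : α ≠ 0) (h : HasAModSq f g r) :
    HasAModSq (α ^ 4 * f + β ^ 4) g r := by
  obtain ⟨p₀, p₁, p₂, p₃, rfl, hr⟩ := h
  refine ⟨α * p₀ + β, α * p₁, α * p₂, α * p₃, ?_, ?_⟩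
  · unfold quarticExpansion
    grind
  · convert hr using 2
    exact aOf_eq_of_proportional (pow_ne_zero 4 hα) (by ring) (by ring)

theorem inv_left {f g r : K} (hf : f ≠ 0) (h : HasAModSq f g r) : HasAModSq f⁻¹ g r := by
  obtain ⟨p₀, p₁, p₂, p₃, rfl, hr⟩ := h
  set f := quarticExpansion g p₀ p₁ p₂ p₃
  -- with `f = A² + B² g`, the expansion of `f³ = A⁴ f + B⁴ g² f` is read off termwise
  set A := p₀ ^ 2 + p₂ ^ 2 * g
  set B := p₁ ^ 2 + p₃ ^ 2 * g
  refine ⟨(A * p₀ + B * p₂ * g) / f, (A * p₁ + B * p₃ * g) / f, (A * p₂ + B * p₀) / f,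
    (A * p₃ + B * p₁) / f, ?_, ?_⟩
  · field_simp
    grind [quarticExpansion]
  · convert hr using 2
    exact aOf_eq_of_proportional (inv_ne_zero (pow_ne_zero 2 hf))
      (by field_simp; grind [quarticExpansion]) (by field_simp; grind [quarticExpansion])

theorem of_eq {f g p₀ p₁ p₂ p₃ : K} (hf : f = quarticExpansion g p₀ p₁ p₂ p₃) :
    HasAModSq f g (aOf g p₁ p₂ p₃) :=
  ⟨p₀, p₁, p₂, p₃, hf, 0, by rw [CharTwo.add_self_eq_zero, zero_pow two_ne_zero]⟩

theorem aOf_add_mem_sqSet {f g r q₀ q₁ q₂ q₃ : K} (hg : g ∉ sqSet K) (h : HasAModSq f g r)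
    (hf : f = quarticExpansion g q₀ q₁ q₂ q₃) : aOf g q₁ q₂ q₃ + r ∈ sqSet K := by
  obtain ⟨p₀, p₁, p₂, p₃, hp, hr⟩ := h
  obtain ⟨-, rfl, rfl, rfl⟩ := quarticExpansion_inj hg (hp.symm.trans hf)
  exact hr

end HasAModSq

theorem moebius_denom_ne_zero {x a b c d : K} (hx : x ∉ sqSet K) (habcd : a * d ≠ b * c) :
    c ^ 4 * x + d ^ 4 ≠ 0 := by
  intro h0
  by_cases hc : c = 0
  · subst hc
    have hd : d = 0 := by simpa using h0
    exact habcd (by simp [hd])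
  · exact hx ⟨(d / c) ^ 2, by field_simp; grind⟩

theorem moebius_eq_affine_inv_affine {x a b c d : K} (hc : c ≠ 0) (hx : c ^ 4 * x + d ^ 4 ≠ 0) :
    (a ^ 4 * x + b ^ 4) / (c ^ 4 * x + d ^ 4) =
      ((a * d + b * c) / c) ^ 4 * (c ^ 4 * x + d ^ 4)⁻¹ + (a / c) ^ 4 := by
  rw [div_eq_iff hx]
  field_simp
  grind

theorem moebius_induction {P : K → Prop}
    (affine : ∀ x α β : K, α ≠ 0 → P x → P (α ^ 4 * x + β ^ 4))
    (inv : ∀ x : K, P x → P x⁻¹) {x a b c d : K} (habcd : a * d ≠ b * c)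
    (hx : c ^ 4 * x + d ^ 4 ≠ 0) (hPx : P x) :
    P ((a ^ 4 * x + b ^ 4) / (c ^ 4 * x + d ^ 4)) := by
  by_cases hc : c = 0
  · subst hc
    have hd : d ≠ 0 := by rintro rfl; simp at habcd
    have ha : a ≠ 0 := by rintro rfl; simp_all
    convert affine x (a / d) (b / d) (div_ne_zero ha hd) hPx using 1
    field_simp
    simp
  · have hdet : a * d + b * c ≠ 0 := fun h => habcd (CharTwo.add_eq_zero.mp h)
    rw [moebius_eq_affine_inv_affine hc hx]
    exact affine _ _ _ (div_ne_zero hdet hc) (inv _ (affine x c d hc hPx))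

theorem moebius_notMem_sqSet {x a b c d : K} (hx : x ∉ sqSet K) (habcd : a * d ≠ b * c) :
    (a ^ 4 * x + b ^ 4) / (c ^ 4 * x + d ^ 4) ∉ sqSet K :=
  moebius_induction (P := (· ∉ sqSet K))
    (fun _ _ β hα hy => add_pow_four_notMem_sqSet β (pow_four_mul_notMem_sqSet hα hy))
    (fun _ => inv_notMem_sqSet) habcd (moebius_denom_ne_zero hx habcd) hx

namespace HasAModSq

variable {f g r a b c d : K}

theorem moebius_left (hf : f ∉ sqSet K) (habcd : a * d ≠ b * c) (h : HasAModSq f g r) :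
    HasAModSq ((a ^ 4 * f + b ^ 4) / (c ^ 4 * f + d ^ 4)) g r :=
  (moebius_induction (P := fun y => y ∉ sqSet K ∧ HasAModSq y g r)
    (fun _ _ β hα hy =>
      ⟨add_pow_four_notMem_sqSet β (pow_four_mul_notMem_sqSet hα hy.1), hy.2.affine_left β hα⟩)
    (fun _ hy => ⟨inv_notMem_sqSet hy.1, hy.2.inv_left (ne_zero_of_notMem_sqSet hy.1)⟩)
    habcd (moebius_denom_ne_zero hf habcd) ⟨hf, h⟩).2

theorem moebius_right (hg : g ∉ sqSet K) (hf : f ∉ sqSet K) (habcd : a * d ≠ b * c)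
    (h : HasAModSq f g r) : HasAModSq f ((a ^ 4 * g + b ^ 4) / (c ^ 4 * g + d ^ 4)) r :=
  (moebius_induction (P := fun x => x ∉ sqSet K ∧ HasAModSq f x r)
    (fun _ _ β hα hx =>
      have hαx := pow_four_mul_notMem_sqSet hα hx.1
      ⟨add_pow_four_notMem_sqSet β hαx, (hx.2.pow_four_mul_right hα).add_pow_four_right β hαx hf⟩)
    (fun _ hx => ⟨inv_notMem_sqSet hx.1, hx.2.inv_right (ne_zero_of_notMem_sqSet hx.1)⟩)
    habcd (moebius_denom_ne_zero hg habcd) ⟨hg, h⟩).2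

end HasAModSq

end CharTwo

end

theorem a_Gamma_invariant_general (K : Type*) [Field K] [CharP K 2]
    (f g : K) (hf : f ∉ sqSet K) (hg : g ∉ sqSet K)
    (a b c d a' b' c' d' : K) (habcd : a * d ≠ b * c) (habcd' : a' * d' ≠ b' * c')
    (p₀ p₁ p₂ p₃ : K) (hp : f = p₀ ^ 4 + p₁ ^ 4 * g + p₂ ^ 4 * g ^ 2 + p₃ ^ 4 * g ^ 3)
    (q₀ q₁ q₂ q₃ : K)
    (hq : (a ^ 4 * f + b ^ 4) / (c ^ 4 * f + d ^ 4) =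
      q₀ ^ 4 + q₁ ^ 4 * ((a' ^ 4 * g + b' ^ 4) / (c' ^ 4 * g + d' ^ 4)) +
      q₂ ^ 4 * ((a' ^ 4 * g + b' ^ 4) / (c' ^ 4 * g + d' ^ 4)) ^ 2 +
      q₃ ^ 4 * ((a' ^ 4 * g + b' ^ 4) / (c' ^ 4 * g + d' ^ 4)) ^ 3) :
    (a ^ 4 * f + b ^ 4) / (c ^ 4 * f + d ^ 4) ∉ sqSet K ∧
    (a' ^ 4 * g + b' ^ 4) / (c' ^ 4 * g + d' ^ 4) ∉ sqSet K ∧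
    aOf g p₁ p₂ p₃ +
      aOf ((a' ^ 4 * g + b' ^ 4) / (c' ^ 4 * g + d' ^ 4)) q₁ q₂ q₃ ∈ sqSet K := by
  have hδg := moebius_notMem_sqSet hg habcd'
  have hclass := ((HasAModSq.of_eq hp).moebius_right hg hf habcd').moebius_left hf habcd
  refine ⟨moebius_notMem_sqSet hf habcd, hδg, ?_⟩
  rw [add_comm]
  exact hclass.aOf_add_mem_sqSet hδg hq

/-- **`Γ`-invariance**: for `f, g ∈ H` and fractional linear transformations
`γ, δ ∈ Γ = PGL₂(K⁴)`, one has `γf, δg ∈ H` and `a(f,g) ≡ a(γf, δg) (mod K²)`. -/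
theorem a_Gamma_invariant (K : Type*) [Field K] [CharP K 2] (hdim : TwoDimOverSquares K)
    (f g : K) (hf : f ∉ sqSet K) (hg : g ∉ sqSet K)
    (a b c d a' b' c' d' : K) (habcd : a * d ≠ b * c) (habcd' : a' * d' ≠ b' * c')
    (p₀ p₁ p₂ p₃ : K) (hp : f = p₀ ^ 4 + p₁ ^ 4 * g + p₂ ^ 4 * g ^ 2 + p₃ ^ 4 * g ^ 3)
    (q₀ q₁ q₂ q₃ : K)
    (hq : (a ^ 4 * f + b ^ 4) / (c ^ 4 * f + d ^ 4) =
      q₀ ^ 4 + q₁ ^ 4 * ((a' ^ 4 * g + b' ^ 4) / (c' ^ 4 * g + d' ^ 4)) +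
      q₂ ^ 4 * ((a' ^ 4 * g + b' ^ 4) / (c' ^ 4 * g + d' ^ 4)) ^ 2 +
      q₃ ^ 4 * ((a' ^ 4 * g + b' ^ 4) / (c' ^ 4 * g + d' ^ 4)) ^ 3) :
    (a ^ 4 * f + b ^ 4) / (c ^ 4 * f + d ^ 4) ∉ sqSet K ∧
    (a' ^ 4 * g + b' ^ 4) / (c' ^ 4 * g + d' ^ 4) ∉ sqSet K ∧
    aOf g p₁ p₂ p₃ +
      aOf ((a' ^ 4 * g + b' ^ 4) / (c' ^ 4 * g + d' ^ 4)) q₁ q₂ q₃ ∈ sqSet K :=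
  a_Gamma_invariant_general K f g hf hg a b c d a' b' c' d' habcd habcd' p₀ p₁ p₂ p₃ hp q₀ q₁ q₂ q₃
    hq
end

section
/- Let k be an algebraically closed field of characteristic 2, K a function field of one variable over k, v a place of K, and f, g ∈ H with g pseudo-tame at v. Then the following are equivalent: (1) there exists s ∈ K such that a(f,g) + s² ∈ O_v (i.e. the class of a(f,g) modulo K² is regular at v); (2) f is pseudo-tame at v. -/
/-- A place of a function field `K` over `k`. -/
structure Place (k K : Type*) [Field k] [Field K] [Algebra k K] where
  v : K → ℤ
  v_mul : ∀ x y : K, x ≠ 0 → y ≠ 0 → v (x * y) = v x + v y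
  v_add : ∀ x y : K, x ≠ 0 → y ≠ 0 → x + y ≠ 0 → min (v x) (v y) ≤ v (x + y)
  v_surj : ∀ n : ℤ, ∃ x : K, x ≠ 0 ∧ v x = n
  v_const : ∀ c : k, c ≠ 0 → v (algebraMap k K c) = 0

/-- `K` is a function field of one variable over `k`. -/
def IsFunctionFieldOneVar (k K : Type*) [Field k] [Field K] [Algebra k K] : Prop :=
  ∃ x : K, Transcendental k x ∧
    FiniteDimensional (IntermediateField.adjoin k ({x} : Set K)) K

/-- `f ∈ H = K \ K²` is pseudo-tame at a place `v`: setting `t := f - c` (`c` the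
residue of `f` at `v`) if `v f ≥ 0`, and `t := 1/f` if `v f < 0`, there is `h` in
the valuation ring `O_v` such that `v (t + h⁴)` is odd. -/
def PseudoTameAt {k K : Type*} [Field k] [Field K] [Algebra k K]
    (P : Place k K) (f : K) : Prop :=
  ∃ t : K,
    ((0 ≤ P.v f ∧ ∃ c : k, t = f - algebraMap k K c ∧ t ≠ 0 ∧ 0 < P.v t) ∨
      (P.v f < 0 ∧ t = f⁻¹)) ∧
    ∃ h : K, (h = 0 ∨ 0 ≤ P.v h) ∧ t + h ^ 4 ≠ 0 ∧ Odd (P.v (t + h ^ 4))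

/-!
Pseudo-tameness of `g` yields `θ` of odd valuation with `g = θ + e⁴` or `g⁻¹ = θ + e⁴`; the
inversion swaps `f₁ ↔ f₃` and leaves `a(f,g)` unchanged, and the translation by `e⁴` changes
`a(f,g)` by a square. In the basis `1, θ, θ², θ³` (characteristic 2),
`f = S² + θ B²` with `S = φ₀² + θ φ₂²`, `B = φ₁² + θ φ₃²`, and `a = θ (m / B)²` with
`m = φ₂² + φ₁ φ₃`. As `v(x²)` is even and `v(θ y²)` is odd, `v(x² + θ y²)` is the smaller of
the two, and its parity says which one. Both sides of the theorem thus become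
`v(θ B²) < v((θ φ₂²)²)`: for `a` because `(θ m)² = (θ φ₂²)² + (θ φ₁ φ₃)²` and the last term
lies strictly above `v(θ B²)`; for `f` because `f - c + h⁴` and `f (f⁻¹ + h⁴)` are again of the
form `S'² + θ B'²`, and `S'` can be reduced to `θ φ₂²` by subtracting the residue of `φ₀`,
which exists since the residue field of a place of `K` is the algebraically closed `k`.
-/

open Polynomial

theorem WithTop.eq_top_of_two_nsmul_eq_add {N : ℤ} (hN : Odd N) {a b : WithTop ℤ}
    (h : 2 • a = N + 2 • b) : a = ⊤ := by
  rw [two_nsmul, two_nsmul] at h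
  induction a with
  | top => rfl
  | coe a =>
    induction b with
    | top => simp at h
    | coe b =>
      norm_cast at h
      obtain ⟨n, rfl⟩ := hN
      omega

theorem WithTop.zero_le_two_nsmul_iff {a : WithTop ℤ} : 0 ≤ 2 • a ↔ 0 ≤ a := by
  rw [two_nsmul]
  induction a with
  | top => simp
  | coe a => norm_cast; omega

theorem WithTop.zero_lt_two_nsmul_iff {a : WithTop ℤ} : 0 < 2 • a ↔ 0 < a := by
  rw [two_nsmul]
  induction a with
  | top => simp
  | coe a => norm_cast; omega

namespace AddValuation

theorem le_map_add_iff_lt {R Γ₀ : Type*} [Ring R] [LinearOrderedAddCommMonoidWithTop Γ₀]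
    (v : AddValuation R Γ₀) {x y : R} {w : Γ₀} (hy : w < v y) (hx : v x ≠ w) :
    w ≤ v (x + y) ↔ w < v x := by
  refine ⟨fun h => lt_of_not_ge fun hxw => ?_, fun h => (v.map_lt_add h hy).le⟩
  have hlt : v x < w := lt_of_le_of_ne hxw hx
  rw [v.map_add_eq_of_lt_left (hlt.trans hy)] at h
  exact h.not_gt hlt

theorem aeval_ne_zero_of_map_eq_one {R K : Type*} [CommRing R] [Field K] [Algebra R K]
    (v : AddValuation K (WithTop ℤ)) {q : R[X]} (hq : q ≠ 0)
    (hc : ∀ i ∈ q.support, v (algebraMap R K (q.coeff i)) = 0) {y : K} (hy : v y = 1) :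
    aeval y q ≠ 0 := by
  classical
  have hterm : ∀ i ∈ q.support, v (algebraMap R K (q.coeff i) * y ^ i) = (i : ℤ) := by
    intro i hi
    rw [v.map_mul, hc i hi, v.map_pow, hy, zero_add]
    norm_cast; simp
  set j := q.natTrailingDegree
  have hj : j ∈ q.support := natTrailingDegree_mem_support_of_nonzero hq
  rw [aeval_def, eval₂_eq_sum, Polynomial.sum_def, ← Finset.add_sum_erase _ _ hj,
    ← v.ne_top_iff, v.map_add_eq_of_lt_left, hterm j hj]
  · exact WithTop.coe_ne_top
  · refine v.map_lt_sum (by rw [hterm j hj]; exact WithTop.coe_ne_top) fun i hi => ?_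
    obtain ⟨hij, hi⟩ := Finset.mem_erase.mp hi
    rw [hterm i hi, hterm j hj, WithTop.coe_lt_coe, Nat.cast_lt]
    exact lt_of_le_of_ne (natTrailingDegree_le_of_mem_supp i hi) (Ne.symm hij)

variable {K : Type*} [Field K] (v : AddValuation K (WithTop ℤ)) {θ : K} {N : ℤ}

theorem eq_zero_of_map_sq_eq_map_mul_sq (hθ : v θ = N) (hN : Odd N) {x y : K}
    (h : v (x ^ 2) = v (θ * y ^ 2)) : x = 0 := by
  rw [v.map_pow, v.map_mul, v.map_pow, hθ] at h
  exact v.top_iff.mp (WithTop.eq_top_of_two_nsmul_eq_add hN h)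

theorem map_mul_sq_ne_zero (hθ : v θ = N) (hN : Odd N) (z : K) : v (θ * z ^ 2) ≠ 0 := by
  intro h
  have := v.eq_zero_of_map_sq_eq_map_mul_sq hθ hN (x := 1) (y := z) (by rw [one_pow, v.map_one, h])
  exact one_ne_zero this

theorem map_sq_add_mul_sq (hθ : v θ = N) (hN : Odd N) (x y : K) :
    v (x ^ 2 + θ * y ^ 2) = min (v (x ^ 2)) (v (θ * y ^ 2)) := by
  by_cases h : v (x ^ 2) = v (θ * y ^ 2)
  · have hx := v.eq_zero_of_map_sq_eq_map_mul_sq hθ hN h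
    have hy : θ * y ^ 2 = 0 := v.top_iff.mp (by simp [← h, hx])
    simp [hx, hy]
  · exact v.map_add_of_distinct_val h

theorem sq_add_mul_sq_ne_zero (hθ : v θ = N) (hN : Odd N) (x : K) {y : K} (hy : y ≠ 0) :
    x ^ 2 + θ * y ^ 2 ≠ 0 := by
  have hθ0 : θ ≠ 0 := by rintro rfl; simp at hθ
  rw [← v.ne_top_iff, v.map_sq_add_mul_sq hθ hN]
  exact ne_top_of_le_ne_top (v.ne_top_iff.mpr (mul_ne_zero hθ0 (pow_ne_zero 2 hy)))
    (min_le_right _ _)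

/-- `v (θ B²)` is the smaller of `v (θ φ₁⁴)` and `v (θ³ φ₃⁴)`, which differ, and
`v ((θ φ₁ φ₃)²)` is their average. -/
theorem map_mul_sq_lt_map_sq (hθ : v θ = N) (hN : Odd N) {φ₁ φ₃ : K}
    (hB : φ₁ ^ 2 + θ * φ₃ ^ 2 ≠ 0) :
    v (θ * (φ₁ ^ 2 + θ * φ₃ ^ 2) ^ 2) < v ((θ * φ₁ * φ₃) ^ 2) := by
  have hθ0 : θ ≠ 0 := by rintro rfl; simp at hθ
  by_cases h13 : φ₁ = 0 ∨ φ₃ = 0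
  · rw [show θ * φ₁ * φ₃ = 0 by rcases h13 with h | h <;> simp [h], zero_pow two_ne_zero,
      map_zero v, lt_top_iff_ne_top, v.ne_top_iff]
    exact mul_ne_zero hθ0 (pow_ne_zero 2 hB)
  push Not at h13
  obtain ⟨a, ha⟩ := WithTop.ne_top_iff_exists.mp ((v.ne_top_iff).mpr h13.1)
  obtain ⟨b, hb⟩ := WithTop.ne_top_iff_exists.mp ((v.ne_top_iff).mpr h13.2)
  rw [v.map_mul, v.map_pow, v.map_sq_add_mul_sq hθ hN, v.map_pow, v.map_mul, v.map_pow, v.map_pow,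
    v.map_mul, v.map_mul, hθ, ← ha, ← hb]
  simp only [← WithTop.coe_nsmul, ← WithTop.coe_add, ← WithTop.coe_min, WithTop.coe_lt_coe,
    nsmul_eq_mul]
  obtain ⟨n, rfl⟩ := hN
  omega

theorem exists_zero_le_map_mul_sq_add_sq_iff (hθ : v θ = N) (hN : Odd N) (z : K) :
    (∃ s, 0 ≤ v (θ * z ^ 2 + s ^ 2)) ↔ 0 ≤ v (θ * z ^ 2) := by
  refine ⟨fun ⟨s, hs⟩ => ?_, fun h => ⟨0, by simpa using h⟩⟩
  rw [add_comm, v.map_sq_add_mul_sq hθ hN] at hs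
  exact (le_min_iff.mp hs).2

theorem zero_le_map_mul_sq_div_iff [CharP K 2] (hθ : v θ = N) (hN : Odd N) {φ₁ φ₃ : K}
    (hB : φ₁ ^ 2 + θ * φ₃ ^ 2 ≠ 0) (φ₂ : K) :
    0 ≤ v (θ * ((φ₂ ^ 2 + φ₁ * φ₃) / (φ₁ ^ 2 + θ * φ₃ ^ 2)) ^ 2) ↔
      v (θ * (φ₁ ^ 2 + θ * φ₃ ^ 2) ^ 2) < v ((θ * φ₂ ^ 2) ^ 2) := by
  set B := φ₁ ^ 2 + θ * φ₃ ^ 2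
  have hθ0 : θ ≠ 0 := by rintro rfl; simp at hθ
  have hfin : v (θ * B ^ 2) ≠ ⊤ := v.ne_top_iff.mpr (mul_ne_zero hθ0 (pow_ne_zero 2 hB))
  have hprod : θ * ((φ₂ ^ 2 + φ₁ * φ₃) / B) ^ 2 * (θ * B ^ 2) =
      (θ * φ₂ ^ 2) ^ 2 + (θ * φ₁ * φ₃) ^ 2 := by
    field_simp
    grind
  have hne : v ((θ * φ₂ ^ 2) ^ 2) ≠ v (θ * B ^ 2) := fun h => hfin <| by
    rw [← h, v.eq_zero_of_map_sq_eq_map_mul_sq hθ hN h]; simp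
  calc 0 ≤ v (θ * ((φ₂ ^ 2 + φ₁ * φ₃) / B) ^ 2)
      ↔ 0 + v (θ * B ^ 2) ≤ v (θ * ((φ₂ ^ 2 + φ₁ * φ₃) / B) ^ 2) + v (θ * B ^ 2) :=
        (WithTop.add_le_add_iff_right hfin).symm
    _ ↔ v (θ * B ^ 2) ≤ v ((θ * φ₂ ^ 2) ^ 2 + (θ * φ₁ * φ₃) ^ 2) := by
        rw [zero_add, ← v.map_mul, hprod]
    _ ↔ _ := v.le_map_add_iff_lt (v.map_mul_sq_lt_map_sq hθ hN hB) hne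

end AddValuation

section CharTwo

variable {K : Type*} [Field K] [CharP K 2]

theorem expansion_eq_sq_add_mul_sq (θ φ₀ φ₁ φ₂ φ₃ : K) :
    φ₀ ^ 4 + φ₁ ^ 4 * θ + φ₂ ^ 4 * θ ^ 2 + φ₃ ^ 4 * θ ^ 3 =
      (φ₀ ^ 2 + θ * φ₂ ^ 2) ^ 2 + θ * (φ₁ ^ 2 + θ * φ₃ ^ 2) ^ 2 := by
  grind

theorem expansion_add_pow_four (θ e f₀ f₁ f₂ f₃ : K) :
    f₀ ^ 4 + f₁ ^ 4 * (θ + e ^ 4) + f₂ ^ 4 * (θ + e ^ 4) ^ 2 + f₃ ^ 4 * (θ + e ^ 4) ^ 3 =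
      (f₀ + f₁ * e + f₂ * e ^ 2 + f₃ * e ^ 3) ^ 4 + (f₁ + f₃ * e ^ 2) ^ 4 * θ +
        (f₂ + f₃ * e) ^ 4 * θ ^ 2 + f₃ ^ 4 * θ ^ 3 := by
  grind

theorem aOf_eq_mul_sq (θ φ₁ φ₂ φ₃ : K) :
    aOf θ φ₁ φ₂ φ₃ = θ * ((φ₂ ^ 2 + φ₁ * φ₃) / (φ₁ ^ 2 + θ * φ₃ ^ 2)) ^ 2 := by
  rw [aOf, div_pow, mul_div_assoc', mul_comm θ]
  congr 1 <;> grind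

theorem aOf_add_pow_four_s11 (θ e f₁ f₂ f₃ : K) :
    aOf (θ + e ^ 4) f₁ f₂ f₃ = aOf θ (f₁ + f₃ * e ^ 2) (f₂ + f₃ * e) f₃ +
      (e ^ 2 * ((f₂ ^ 2 + f₁ * f₃) / (f₁ ^ 2 + (θ + e ^ 4) * f₃ ^ 2))) ^ 2 := by
  have hm : (f₂ + f₃ * e) ^ 2 + (f₁ + f₃ * e ^ 2) * f₃ = f₂ ^ 2 + f₁ * f₃ := by grind
  have hB : (f₁ + f₃ * e ^ 2) ^ 2 + θ * f₃ ^ 2 = f₁ ^ 2 + (θ + e ^ 4) * f₃ ^ 2 := by grind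
  rw [aOf_eq_mul_sq, aOf_eq_mul_sq, hm, hB]
  ring

theorem exists_add_sq_add_sq_iff (p : K → Prop) (a r : K) :
    (∃ s, p (a + r ^ 2 + s ^ 2)) ↔ ∃ s, p (a + s ^ 2) := by
  refine ⟨fun ⟨s, h⟩ => ⟨r + s, ?_⟩, fun ⟨s, h⟩ => ⟨r + s, ?_⟩⟩
  · rwa [show a + (r + s) ^ 2 = a + r ^ 2 + s ^ 2 by grind]
  · rwa [show a + r ^ 2 + (r + s) ^ 2 = a + s ^ 2 by grind]

end CharTwo

theorem aOf_inv {K : Type*} [Field K] (g f₁ f₂ f₃ : K) :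
    aOf g⁻¹ (f₃ * g) (f₂ * g) (f₁ * g) = aOf g f₁ f₂ f₃ := by
  rcases eq_or_ne g 0 with rfl | hg
  · simp [aOf]
  simp only [aOf]
  field_simp
  ring

theorem expansion_inv {K : Type*} [Field K] (g f₀ f₁ f₂ f₃ : K) :
    f₀ ^ 4 + f₁ ^ 4 * g + f₂ ^ 4 * g ^ 2 + f₃ ^ 4 * g ^ 3 =
      f₀ ^ 4 + (f₃ * g) ^ 4 * g⁻¹ + (f₂ * g) ^ 4 * g⁻¹ ^ 2 + (f₁ * g) ^ 4 * g⁻¹ ^ 3 := by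
  rcases eq_or_ne g 0 with rfl | hg
  · simp
  field_simp
  ring

theorem Algebra.isAlgebraic_adjoin_singleton_of_transcendental {k K : Type*} [Field k] [Field K]
    [Algebra k K] {x : K} [FiniteDimensional (IntermediateField.adjoin k {x}) K]
    {u : K} (hu : Transcendental k u) : Algebra.IsAlgebraic (Algebra.adjoin k {u}) K := by
  open IntermediateField.algebraAdjoinAdjoin in
  have : Algebra.IsAlgebraic (Algebra.adjoin k {x}) K :=
    IsFractionRing.comap_isAlgebraic_iff.mpr
      (Algebra.IsAlgebraic.of_finite (IntermediateField.adjoin k {x}) K)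
  have hbasis : IsTranscendenceBasis k (Subtype.val : ({u} : Set K) → K) :=
    (algebraicIndependent_unique_type_iff.mpr hu).isTranscendenceBasis_of_trdeg_le_of_finite
      ((Algebra.IsAlgebraic.trdeg_le_cardinalMk k {x}).trans (by simp))
  have h := hbasis.isAlgebraic
  rwa [Subtype.range_val] at h

namespace Place

variable {k K : Type*} [Field k] [Field K] [Algebra k K] (P : Place k K)

theorem v_one : P.v 1 = 0 := by
  simpa using (P.v_mul 1 1 one_ne_zero one_ne_zero).symm

open Classical in
/-- `P.v 0` is not constrained by the axioms of a place. -/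
noncomputable def val : AddValuation K (WithTop ℤ) :=
  AddValuation.of (fun x => if x = 0 then ⊤ else (P.v x : WithTop ℤ)) (if_pos rfl)
    (by simp [P.v_one])
    (fun x y => by
      by_cases hx : x = 0
      · simp [hx]
      by_cases hy : y = 0
      · simp [hy]
      by_cases hxy : x + y = 0
      · simp [hxy]
      simp only [hx, hy, hxy, if_false]
      exact_mod_cast P.v_add x y hx hy hxy)
    (fun x y => by
      by_cases hx : x = 0
      · simp [hx]
      by_cases hy : y = 0
      · simp [hy]
      simp only [hx, hy, mul_eq_zero, or_self, if_false]
      exact_mod_cast P.v_mul x y hx hy)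

variable {P}

theorem val_of_ne_zero {x : K} (hx : x ≠ 0) : P.val x = P.v x := if_neg hx

theorem zero_le_val_iff {x : K} : 0 ≤ P.val x ↔ x = 0 ∨ 0 ≤ P.v x := by
  rcases eq_or_ne x 0 with rfl | hx
  · simp
  · simp [val_of_ne_zero hx, hx]

theorem zero_le_val_algebraMap (c : k) : 0 ≤ P.val (algebraMap k K c) := by
  rcases eq_or_ne c 0 with rfl | hc
  · simp
  · rw [val_of_ne_zero ((_root_.map_ne_zero _).mpr hc), P.v_const c hc]; rfl

theorem v_pow {x : K} (hx : x ≠ 0) (n : ℕ) : P.v (x ^ n) = n * P.v x := by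
  have := P.val.map_pow x n
  rw [val_of_ne_zero hx, val_of_ne_zero (pow_ne_zero n hx), ← WithTop.coe_nsmul,
    WithTop.coe_inj] at this
  rw [this, nsmul_eq_mul]

theorem v_inv {x : K} (hx : x ≠ 0) : P.v x⁻¹ = -P.v x := by
  have := P.v_mul x x⁻¹ hx (inv_ne_zero hx)
  rw [mul_inv_cancel₀ hx, P.v_one] at this
  omega

theorem val_aeval_eq_zero [IsAlgClosed k] {u : K}
    (hu : ∀ c : k, P.val (u - algebraMap k K c) = 0) {p : k[X]} (hp : p ≠ 0) :
    P.val (aeval u p) = 0 := by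
  conv_lhs => rw [(IsAlgClosed.splits p).eq_prod_roots]
  simp only [map_mul, aeval_C, map_multiset_prod, Multiset.map_map, Function.comp_def, map_sub,
    aeval_X]
  rw [AddValuation.map_mul,
    val_of_ne_zero ((_root_.map_ne_zero _).mpr (leadingCoeff_ne_zero.mpr hp)),
    P.v_const _ (leadingCoeff_ne_zero.mpr hp), WithTop.coe_zero, zero_add]
  exact Multiset.prod_induction (fun z => P.val z = 0) _
    (fun a b ha hb => by rw [AddValuation.map_mul, ha, hb, add_zero]) P.val.map_one
    fun z hz => by obtain ⟨a, -, rfl⟩ := Multiset.mem_map.mp hz; exact hu a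

/-- Otherwise `v` would vanish on `k[u] \ {0}`, so `u` would be transcendental, `K` algebraic
over `k[u]`, and no element of valuation `1` could satisfy an equation over `k[u]`. -/
theorem exists_residue [IsAlgClosed k] (hK : IsFunctionFieldOneVar k K) {u : K}
    (hu : 0 ≤ P.val u) : ∃ c : k, 0 < P.val (u - algebraMap k K c) := by
  by_contra! h
  have hflat : ∀ c : k, P.val (u - algebraMap k K c) = 0 := fun c =>
    le_antisymm (h c) (le_trans (le_min hu (zero_le_val_algebraMap c)) (P.val.map_sub _ _))
  have htr : Transcendental k u := fun ⟨p, hp, hpu⟩ => by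
    simpa [hpu] using val_aeval_eq_zero hflat hp
  obtain ⟨x, -, hfin⟩ := hK
  have := Algebra.isAlgebraic_adjoin_singleton_of_transcendental (x := x) htr
  obtain ⟨y, hy0, hy⟩ := P.v_surj 1
  obtain ⟨q, hq, hqy⟩ := Algebra.IsAlgebraic.isAlgebraic (R := Algebra.adjoin k {u}) y
  refine P.val.aeval_ne_zero_of_map_eq_one hq (fun i hi => ?_)
    (by rw [val_of_ne_zero hy0, hy]; rfl) hqy
  obtain ⟨p, hp⟩ := (Algebra.adjoin_singleton_eq_range_aeval k u).le (q.coeff i).2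
  change P.val (q.coeff i : K) = 0
  rw [← hp]
  refine val_aeval_eq_zero hflat ?_
  rintro rfl
  exact mem_support_iff.mp hi (Subtype.ext (by simpa using hp.symm))

variable {θ : K}

theorem odd_v_sq_add_mul_sq_iff (hθ0 : θ ≠ 0) (hθ : Odd (P.v θ)) {x y : K}
    (hz : x ^ 2 + θ * y ^ 2 ≠ 0) :
    Odd (P.v (x ^ 2 + θ * y ^ 2)) ↔ P.val (θ * y ^ 2) < P.val (x ^ 2) := by
  have hθv := val_of_ne_zero (P := P) hθ0
  have hv := P.val.map_sq_add_mul_sq hθv hθ x y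
  rw [val_of_ne_zero hz] at hv
  constructor
  · intro hodd
    by_contra! hle
    rw [min_eq_left hle, P.val.map_pow] at hv
    induction hx : P.val x with
    | top => simp [hx, two_nsmul] at hv
    | coe a =>
      rw [hx, ← WithTop.coe_nsmul, WithTop.coe_inj, nsmul_eq_mul] at hv
      obtain ⟨m, hm⟩ := hodd
      omega
  · intro hlt
    rw [min_eq_right hlt.le, P.val.map_mul, P.val.map_pow, hθv] at hv
    induction hy : P.val y with
    | top => simp [hy, two_nsmul] at hv
    | coe b =>
      rw [hy, ← WithTop.coe_nsmul, ← WithTop.coe_add, WithTop.coe_inj, nsmul_eq_mul] at hv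
      rw [hv]
      exact hθ.add_even (even_two_mul b)

theorem not_odd_v_of_le (hθ0 : θ ≠ 0) (hθ : Odd (P.v θ)) {y B : K}
    (hle : P.val ((θ * y ^ 2) ^ 2) ≤ P.val (θ * B ^ 2)) (r : K)
    (hz : (r ^ 2 + θ * y ^ 2) ^ 2 + θ * B ^ 2 ≠ 0) :
    ¬Odd (P.v ((r ^ 2 + θ * y ^ 2) ^ 2 + θ * B ^ 2)) := by
  rw [odd_v_sq_add_mul_sq_iff hθ0 hθ hz]
  refine fun hlt => (hlt.trans_le ?_).not_ge hle
  rw [P.val.map_pow, P.val.map_pow, P.val.map_sq_add_mul_sq (val_of_ne_zero hθ0) hθ]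
  exact nsmul_le_nsmul_right (min_le_right _ _) 2

theorem odd_v_of_lt (hθ0 : θ ≠ 0) (hθ : Odd (P.v θ)) {y B : K}
    (hlt : P.val (θ * B ^ 2) < P.val ((θ * y ^ 2) ^ 2)) :
    (θ * y ^ 2) ^ 2 + θ * B ^ 2 ≠ 0 ∧ Odd (P.v ((θ * y ^ 2) ^ 2 + θ * B ^ 2)) := by
  have hB : B ≠ 0 := by rintro rfl; simp at hlt
  have hz := P.val.sq_add_mul_sq_ne_zero (val_of_ne_zero hθ0) hθ (θ * y ^ 2) hB
  exact ⟨hz, (odd_v_sq_add_mul_sq_iff hθ0 hθ hz).mpr hlt⟩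

variable [CharP K 2]

theorem lt_of_pseudoTameAt [IsAlgClosed k] (hθ0 : θ ≠ 0) (hθ : Odd (P.v θ)) {x y B : K}
    (hB : B ≠ 0) (h : PseudoTameAt P ((x ^ 2 + θ * y ^ 2) ^ 2 + θ * B ^ 2)) :
    P.val (θ * B ^ 2) < P.val ((θ * y ^ 2) ^ 2) := by
  set f := (x ^ 2 + θ * y ^ 2) ^ 2 + θ * B ^ 2
  have hf : f ≠ 0 := P.val.sq_add_mul_sq_ne_zero (val_of_ne_zero hθ0) hθ _ hB
  obtain ⟨t, ht, h, -, hz, hodd⟩ := h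
  by_contra! hle
  rcases ht with ⟨-, c, rfl, -, -⟩ | ⟨-, rfl⟩
  · obtain ⟨d, rfl⟩ := IsAlgClosed.exists_pow_nat_eq c four_pos
    have e : f - algebraMap k K (d ^ 4) + h ^ 4 =
        ((x + algebraMap k K d + h) ^ 2 + θ * y ^ 2) ^ 2 + θ * B ^ 2 := by
      rw [map_pow]; grind
    rw [e] at hz hodd
    exact not_odd_v_of_le hθ0 hθ hle _ hz hodd
  · have e : f * (f⁻¹ + h ^ 4) =
        ((1 + x * h) ^ 2 + θ * (y * h) ^ 2) ^ 2 + θ * (B * h ^ 2) ^ 2 := by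
      field_simp
      grind
    have hle' : P.val ((θ * (y * h) ^ 2) ^ 2) ≤ P.val (θ * (B * h ^ 2) ^ 2) := by
      rw [show (θ * (y * h) ^ 2) ^ 2 = (θ * y ^ 2) ^ 2 * h ^ 4 by ring,
        show θ * (B * h ^ 2) ^ 2 = θ * B ^ 2 * h ^ 4 by ring, P.val.map_mul, P.val.map_mul]
      exact add_le_add hle le_rfl
    have hnum := not_odd_v_of_le hθ0 hθ hle' (1 + x * h) (e ▸ mul_ne_zero hf hz)
    rw [← e, P.v_mul _ _ hf hz] at hnum
    exact hnum ((Int.not_odd_iff_even.mp (not_odd_v_of_le hθ0 hθ hle x hf)).add_odd hodd)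

theorem pseudoTameAt_of_lt_of_nonneg [IsAlgClosed k] (hK : IsFunctionFieldOneVar k K)
    (hθ0 : θ ≠ 0) (hθ : Odd (P.v θ)) {x y B : K} (hB : B ≠ 0)
    (hlt : P.val (θ * B ^ 2) < P.val ((θ * y ^ 2) ^ 2))
    (hf0 : 0 ≤ P.v ((x ^ 2 + θ * y ^ 2) ^ 2 + θ * B ^ 2)) :
    PseudoTameAt P ((x ^ 2 + θ * y ^ 2) ^ 2 + θ * B ^ 2) := by
  set f := (x ^ 2 + θ * y ^ 2) ^ 2 + θ * B ^ 2
  have hθv := val_of_ne_zero (P := P) hθ0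
  have hf : f ≠ 0 := P.val.sq_add_mul_sq_ne_zero hθv hθ _ hB
  have hvf : 0 ≤ P.val f := by rw [val_of_ne_zero hf]; exact_mod_cast hf0
  rw [P.val.map_sq_add_mul_sq hθv hθ, le_min_iff, P.val.map_pow,
    WithTop.zero_le_two_nsmul_iff, P.val.map_sq_add_mul_sq hθv hθ, le_min_iff, P.val.map_pow,
    WithTop.zero_le_two_nsmul_iff] at hvf
  obtain ⟨⟨hx, hy⟩, hB'⟩ := hvf
  replace hy := lt_of_le_of_ne hy (P.val.map_mul_sq_ne_zero hθv hθ y).symm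
  replace hB' := lt_of_le_of_ne hB' (P.val.map_mul_sq_ne_zero hθv hθ B).symm
  obtain ⟨d, hd⟩ := exists_residue hK hx
  set r := x - algebraMap k K d
  have e : f - algebraMap k K (d ^ 4) = (r ^ 2 + θ * y ^ 2) ^ 2 + θ * B ^ 2 := by
    rw [map_pow]; grind
  have ht0 : f - algebraMap k K (d ^ 4) ≠ 0 := e ▸ P.val.sq_add_mul_sq_ne_zero hθv hθ _ hB
  have htpos : 0 < P.val (f - algebraMap k K (d ^ 4)) := by
    rw [e]
    refine P.val.map_lt_add ?_ hB'
    rw [P.val.map_pow, WithTop.zero_lt_two_nsmul_iff]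
    exact P.val.map_lt_add (by rwa [P.val.map_pow, WithTop.zero_lt_two_nsmul_iff]) hy
  refine ⟨_, Or.inl ⟨hf0, d ^ 4, rfl, ht0, ?_⟩, r, zero_le_val_iff.mp hd.le, ?_⟩
  · rwa [val_of_ne_zero ht0, ← WithTop.coe_zero, WithTop.coe_lt_coe] at htpos
  · rw [show f - algebraMap k K (d ^ 4) + r ^ 4 = (θ * y ^ 2) ^ 2 + θ * B ^ 2 by
      rw [e]; grind]
    exact odd_v_of_lt hθ0 hθ hlt

theorem pseudoTameAt_of_lt_of_neg (hθ0 : θ ≠ 0) (hθ : Odd (P.v θ)) {x y B : K} (hB : B ≠ 0)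
    (hlt : P.val (θ * B ^ 2) < P.val ((θ * y ^ 2) ^ 2))
    (hf0 : P.v ((x ^ 2 + θ * y ^ 2) ^ 2 + θ * B ^ 2) < 0) :
    PseudoTameAt P ((x ^ 2 + θ * y ^ 2) ^ 2 + θ * B ^ 2) := by
  set f := (x ^ 2 + θ * y ^ 2) ^ 2 + θ * B ^ 2
  have hθv := val_of_ne_zero (P := P) hθ0
  have hf : f ≠ 0 := P.val.sq_add_mul_sq_ne_zero hθv hθ _ hB
  by_cases hodd : Odd (P.v f)
  · refine ⟨f⁻¹, Or.inr ⟨hf0, rfl⟩, 0, Or.inl rfl, by simpa using hf, ?_⟩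
    simpa [v_inv hf] using hodd.neg
  rw [odd_v_sq_add_mul_sq_iff hθ0 hθ hf, not_lt] at hodd
  have hS : P.val (x ^ 2 + θ * y ^ 2) < P.val (θ * y ^ 2) := by
    refine lt_of_nsmul_lt_nsmul_right 2 ?_
    rw [← P.val.map_pow, ← P.val.map_pow]
    exact hodd.trans_lt hlt
  rw [P.val.map_sq_add_mul_sq hθv hθ, min_lt_iff, lt_self_iff_false, or_false] at hS
  have hvf : P.val f = P.val (x ^ 4) := by
    rw [P.val.map_sq_add_mul_sq hθv hθ, min_eq_left hodd, P.val.map_pow,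
      P.val.map_sq_add_mul_sq hθv hθ, min_eq_left hS.le, ← P.val.map_pow, ← pow_mul]
  have hx : x ≠ 0 := by
    rintro rfl
    exact P.val.ne_top_iff.mpr hf (by simpa using hvf)
  rw [val_of_ne_zero hf, val_of_ne_zero (pow_ne_zero 4 hx), WithTop.coe_inj, v_pow hx] at hvf
  have e : f * x ^ 4 * (f⁻¹ + x⁻¹ ^ 4) = (θ * y ^ 2) ^ 2 + θ * B ^ 2 := by
    field_simp
    grind
  obtain ⟨hne, hodd'⟩ := odd_v_of_lt hθ0 hθ hlt
  rw [← e] at hne hodd'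
  have hz : f⁻¹ + x⁻¹ ^ 4 ≠ 0 := right_ne_zero_of_mul hne
  rw [P.v_mul _ _ (mul_ne_zero hf (pow_ne_zero 4 hx)) hz, P.v_mul _ _ hf (pow_ne_zero 4 hx),
    v_pow hx] at hodd'
  refine ⟨f⁻¹, Or.inr ⟨hf0, rfl⟩, x⁻¹, Or.inr ?_, hz, ?_⟩
  · rw [v_inv hx]; omega
  · obtain ⟨m, hm⟩ := hodd'
    exact ⟨m - 4 * P.v x, by push_cast at hm; omega⟩

theorem pseudoTameAt_sq_add_mul_sq_iff [IsAlgClosed k] (hK : IsFunctionFieldOneVar k K)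
    (hθ0 : θ ≠ 0) (hθ : Odd (P.v θ)) {x y B : K} (hB : B ≠ 0) :
    PseudoTameAt P ((x ^ 2 + θ * y ^ 2) ^ 2 + θ * B ^ 2) ↔
      P.val (θ * B ^ 2) < P.val ((θ * y ^ 2) ^ 2) := by
  refine ⟨lt_of_pseudoTameAt hθ0 hθ hB, fun hlt => ?_⟩
  rcases le_or_gt 0 (P.v ((x ^ 2 + θ * y ^ 2) ^ 2 + θ * B ^ 2)) with hf0 | hf0
  · exact pseudoTameAt_of_lt_of_nonneg hK hθ0 hθ hB hlt hf0
  · exact pseudoTameAt_of_lt_of_neg hθ0 hθ hB hlt hf0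

theorem _root_.PseudoTameAt.exists_odd_add_pow_four [IsAlgClosed k] {g : K}
    (h : PseudoTameAt P g) :
    ∃ θ e : K, θ ≠ 0 ∧ Odd (P.v θ) ∧ (g = θ + e ^ 4 ∨ g⁻¹ = θ + e ^ 4) := by
  obtain ⟨t, ht, h, -, hz, hodd⟩ := h
  rcases ht with ⟨-, c, rfl, -, -⟩ | ⟨-, rfl⟩
  · obtain ⟨d, rfl⟩ := IsAlgClosed.exists_pow_nat_eq c four_pos
    exact ⟨_, algebraMap k K d + h, hz, hodd, Or.inl (by rw [map_pow]; grind)⟩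
  · exact ⟨_, h, hz, hodd, Or.inr (by grind)⟩

theorem regular_iff_pseudoTameAt_of_eq_add_pow_four [IsAlgClosed k]
    (hK : IsFunctionFieldOneVar k K) (hθ0 : θ ≠ 0) (hθ : Odd (P.v θ)) {e g : K}
    (hg : g = θ + e ^ 4) {f₀ f₁ f₂ f₃ : K}
    (hf : ∀ y : K, y ^ 2 ≠ f₀ ^ 4 + f₁ ^ 4 * g + f₂ ^ 4 * g ^ 2 + f₃ ^ 4 * g ^ 3) :
    (∃ s : K, 0 ≤ P.val (aOf g f₁ f₂ f₃ + s ^ 2)) ↔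
      PseudoTameAt P (f₀ ^ 4 + f₁ ^ 4 * g + f₂ ^ 4 * g ^ 2 + f₃ ^ 4 * g ^ 3) := by
  subst hg
  have hθv := val_of_ne_zero (P := P) hθ0
  rw [expansion_add_pow_four, expansion_eq_sq_add_mul_sq] at hf ⊢
  have hB : (f₁ + f₃ * e ^ 2) ^ 2 + θ * f₃ ^ 2 ≠ 0 := fun h =>
    hf ((f₀ + f₁ * e + f₂ * e ^ 2 + f₃ * e ^ 3) ^ 2 + θ * (f₂ + f₃ * e) ^ 2) (by rw [h]; ring)
  rw [aOf_add_pow_four_s11, exists_add_sq_add_sq_iff (fun z => 0 ≤ P.val z), aOf_eq_mul_sq,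
    P.val.exists_zero_le_map_mul_sq_add_sq_iff hθv hθ, P.val.zero_le_map_mul_sq_div_iff hθv hθ hB,
    pseudoTameAt_sq_add_mul_sq_iff hK hθ0 hθ hB]

end Place

theorem a_regular_iff_pseudoTame_general
    (k K : Type*) [Field k] [IsAlgClosed k] [CharP k 2] [Field K] [Algebra k K]
    (hK : IsFunctionFieldOneVar k K) (P : Place k K)
    (f g : K) (hf : ∀ y : K, y ^ 2 ≠ f)
    (hgpt : PseudoTameAt P g)
    (f₀ f₁ f₂ f₃ : K)
    (hexp : f = f₀ ^ 4 + f₁ ^ 4 * g + f₂ ^ 4 * g ^ 2 + f₃ ^ 4 * g ^ 3) :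
    (∃ s : K, aOf g f₁ f₂ f₃ + s ^ 2 = 0 ∨ 0 ≤ P.v (aOf g f₁ f₂ f₃ + s ^ 2)) ↔
      PseudoTameAt P f := by
  have : CharP K 2 := charP_of_injective_algebraMap (algebraMap k K).injective 2
  simp_rw [← Place.zero_le_val_iff]
  subst hexp
  obtain ⟨θ, e, hθ0, hθ, hg | hg⟩ := hgpt.exists_odd_add_pow_four
  · exact Place.regular_iff_pseudoTameAt_of_eq_add_pow_four hK hθ0 hθ hg hf
  · rw [expansion_inv g] at hf ⊢
    rw [← aOf_inv]
    exact Place.regular_iff_pseudoTameAt_of_eq_add_pow_four hK hθ0 hθ hg hf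

/-- For `f, g ∈ H` with `g` pseudo-tame at a place `v`: the class of `a(f,g)`
modulo `K²` is regular at `v` if and only if `f` is pseudo-tame at `v`. -/
theorem a_regular_iff_pseudoTame
    (k K : Type*) [Field k] [IsAlgClosed k] [CharP k 2] [Field K] [Algebra k K]
    (hK : IsFunctionFieldOneVar k K) (P : Place k K)
    (f g : K) (hf : ∀ y : K, y ^ 2 ≠ f) (hg : ∀ y : K, y ^ 2 ≠ g)
    (hgpt : PseudoTameAt P g)
    (f₀ f₁ f₂ f₃ : K)
    (hexp : f = f₀ ^ 4 + f₁ ^ 4 * g + f₂ ^ 4 * g ^ 2 + f₃ ^ 4 * g ^ 3) :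
    (∃ s : K, aOf g f₁ f₂ f₃ + s ^ 2 = 0 ∨ 0 ≤ P.v (aOf g f₁ f₂ f₃ + s ^ 2)) ↔
      PseudoTameAt P f :=
  a_regular_iff_pseudoTame_general k K hK P f g hf hgpt f₀ f₁ f₂ f₃ hexp
end
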